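/- For any CGS G, state q, BSL state formula φ, assignment χ for φ, set of agents A ⊆ Ag, agents a_{i_1},…,a_{i_k} ∈ A, and strategies σ_1,…,σ_k: G, χ, q ⊨_SL tr_A(φ) if and only if G, χ[a_{i_1}↦σ_1,…,a_{i_k}↦σ_k], q ⊨_SL tr_A(φ). -/

import Mathlib

/-- A concurrent game structure: transition function, initial state, valuation. -/
structure CGS (S Ag Act AP : Type) where
  δ : S → (Ag → Act) → S
  init : S
  val : S → AP → Prop

variable {S Ag Act AP Var : Type}

/-- An initial (finite) path: a start state together with the list of decisions taken. -/
abbrev FPath (S Ag Act : Type) := S × List (Ag → Act)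

/-- Last state of an initial path. -/
def CGS.lastState (G : CGS S Ag Act AP) (ρ : FPath S Ag Act) : S :=
  ρ.2.foldl G.δ ρ.1

/-- A strategy assigns an action to every initial path. -/
abbrev Strat (S Ag Act : Type) := FPath S Ag Act → Act

/-- Concatenation of initial paths (meaningful when `G.lastState ρ = ρ'.1`,
i.e. they are glued at the shared state). -/
def FPath.concat (ρ ρ' : FPath S Ag Act) : FPath S Ag Act := (ρ.1, ρ.2 ++ ρ'.2)

/-- The finite prefix with `n` decisions of the play from `q` whose decision stream is `d`. -/
def prefixPath (q : S) (d : ℕ → Ag → Act) (n : ℕ) : FPath S Ag Act :=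
  (q, List.ofFn fun i : Fin n => d i)

/-- The state reached after `i` steps of the play from `q` with decision stream `d`. -/
def stateAt (G : CGS S Ag Act AP) (q : S) (d : ℕ → Ag → Act) (i : ℕ) : S :=
  G.lastState (prefixPath q d i)

/-- An assignment: a partial map from agents and variables to strategies. -/
abbrev Assign (S Ag Act Var : Type) := Ag ⊕ Var → Option (Strat S Ag Act)

/-- The outcome of an assignment from a state: the set of plays (identified with
their decision streams) compatible with all strategies assigned to agents. -/
def outcome (G : CGS S Ag Act AP) (q : S) (χ : Assign S Ag Act Var) :
    Set (ℕ → Ag → Act) :=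
  {d | ∀ (k : ℕ) (a : Ag) (σ : Strat S Ag Act),
      χ (Sum.inl a) = some σ → d k a = σ (prefixPath q d k)}

/-- The `ρ`-translation of a strategy. -/
def transStrat [DecidableEq S] (G : CGS S Ag Act AP) (ρ : FPath S Ag Act)
    (σ : Strat S Ag Act) : Strat S Ag Act :=
  fun ρ' => if ρ'.1 = G.lastState ρ then σ (ρ.concat ρ') else σ ρ'

/-- The `ρ`-translation of an assignment. -/
def transAssign [DecidableEq S] (G : CGS S Ag Act AP) (ρ : FPath S Ag Act)
    (χ : Assign S Ag Act Var) : Assign S Ag Act Var :=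
  fun l => (χ l).map (transStrat G ρ)

/-- Syntax of Strategy Logic (SL). -/
inductive SLForm (AP Ag Var : Type) : Type where
  | atom : AP → SLForm AP Ag Var
  | neg  : SLForm AP Ag Var → SLForm AP Ag Var
  | or   : SLForm AP Ag Var → SLForm AP Ag Var → SLForm AP Ag Var
  | next : SLForm AP Ag Var → SLForm AP Ag Var
  | untl : SLForm AP Ag Var → SLForm AP Ag Var → SLForm AP Ag Var
  | exi  : Var → SLForm AP Ag Var → SLForm AP Ag Var
  | bind : Ag → Var → SLForm AP Ag Var → SLForm AP Ag Var

mutual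
/-- State formulas of Branching-time Strategy Logic (BSL). -/
inductive BSLForm (AP Ag Var : Type) : Type where
  | atom : AP → BSLForm AP Ag Var
  | neg  : BSLForm AP Ag Var → BSLForm AP Ag Var
  | or   : BSLForm AP Ag Var → BSLForm AP Ag Var → BSLForm AP Ag Var
  | exi  : Var → BSLForm AP Ag Var → BSLForm AP Ag Var
  | bind : Ag → Var → BSLForm AP Ag Var → BSLForm AP Ag Var
  | unbind : Ag → BSLForm AP Ag Var → BSLForm AP Ag Var
  | pathE : BSLPath AP Ag Var → BSLForm AP Ag Var
/-- Path formulas of BSL. -/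
inductive BSLPath (AP Ag Var : Type) : Type where
  | state : BSLForm AP Ag Var → BSLPath AP Ag Var
  | neg   : BSLPath AP Ag Var → BSLPath AP Ag Var
  | or    : BSLPath AP Ag Var → BSLPath AP Ag Var → BSLPath AP Ag Var
  | next  : BSLPath AP Ag Var → BSLPath AP Ag Var
  | untl  : BSLPath AP Ag Var → BSLPath AP Ag Var → BSLPath AP Ag Var
end

/-- Semantics of SL. Temporal operators are evaluated on an outcome play of the
current assignment (for complete assignments — the only case where the SL
semantics is defined — this play is unique), with the assignment translated
along the play. -/
def SLsat [DecidableEq S] [DecidableEq Ag] [DecidableEq Var] (G : CGS S Ag Act AP) :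
    Assign S Ag Act Var → S → SLForm AP Ag Var → Prop
  | χ, q, .atom p => G.val q p
  | χ, q, .neg φ => ¬ SLsat G χ q φ
  | χ, q, .or φ φ' => SLsat G χ q φ ∨ SLsat G χ q φ'
  | χ, q, .exi x φ =>
      ∃ σ : Strat S Ag Act, SLsat G (Function.update χ (Sum.inr x) (some σ)) q φ
  | χ, q, .bind a x φ => SLsat G (Function.update χ (Sum.inl a) (χ (Sum.inr x))) q φ
  | χ, q, .next φ => ∃ d ∈ outcome G q χ,
      SLsat G (transAssign G (prefixPath q d 1) χ) (stateAt G q d 1) φ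
  | χ, q, .untl φ φ' => ∃ d ∈ outcome G q χ, ∃ j : ℕ,
      SLsat G (transAssign G (prefixPath q d j) χ) (stateAt G q d j) φ' ∧
      ∀ k < j, SLsat G (transAssign G (prefixPath q d k) χ) (stateAt G q d k) φ

mutual
/-- Semantics of BSL state formulas, at a state under an assignment. -/
def BSLsat [DecidableEq S] [DecidableEq Ag] [DecidableEq Var] (G : CGS S Ag Act AP)
    (χ : Assign S Ag Act Var) (q : S) : BSLForm AP Ag Var → Prop
  | .atom p => G.val q p
  | .neg φ => ¬ BSLsat G χ q φ
  | .or φ φ' => BSLsat G χ q φ ∨ BSLsat G χ q φ'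
  | .exi x φ =>
      ∃ σ : Strat S Ag Act, BSLsat G (Function.update χ (Sum.inr x) (some σ)) q φ
  | .bind a x φ => BSLsat G (Function.update χ (Sum.inl a) (χ (Sum.inr x))) q φ
  | .unbind a φ => BSLsat G (Function.update χ (Sum.inl a) none) q φ
  | .pathE ψ => ∃ d ∈ outcome G q χ, BSLsatP G χ q d 0 ψ

/-- Semantics of BSL path formulas, on the play from `q` with decision stream
`d`, at position `i`; the assignment is translated by the prefix as state
formulas are evaluated. -/
def BSLsatP [DecidableEq S] [DecidableEq Ag] [DecidableEq Var] (G : CGS S Ag Act AP)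
    (χ : Assign S Ag Act Var) (q : S) (d : ℕ → Ag → Act) (i : ℕ) :
    BSLPath AP Ag Var → Prop
  | .state φ => BSLsat G (transAssign G (prefixPath q d i) χ) (stateAt G q d i) φ
  | .neg ψ => ¬ BSLsatP G χ q d i ψ
  | .or ψ ψ' => BSLsatP G χ q d i ψ ∨ BSLsatP G χ q d i ψ'
  | .next ψ => BSLsatP G χ q d (i + 1) ψ
  | .untl ψ ψ' => ∃ j, i ≤ j ∧ BSLsatP G χ q d j ψ' ∧
      ∀ k, i ≤ k → k < j → BSLsatP G χ q d k ψ
end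

/-- Free variables of an SL formula. -/
def SLfree : SLForm AP Ag Var → Set Var
  | .atom _ => ∅
  | .neg φ => SLfree φ
  | .or φ φ' => SLfree φ ∪ SLfree φ'
  | .next φ => SLfree φ
  | .untl φ φ' => SLfree φ ∪ SLfree φ'
  | .exi x φ => SLfree φ \ {x}
  | .bind _ x φ => insert x (SLfree φ)

mutual
/-- Free variables of a BSL state formula. -/
def BSLfree : BSLForm AP Ag Var → Set Var
  | .atom _ => ∅
  | .neg φ => BSLfree φ
  | .or φ φ' => BSLfree φ ∪ BSLfree φ'
  | .exi x φ => BSLfree φ \ {x}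
  | .bind _ x φ => insert x (BSLfree φ)
  | .unbind _ φ => BSLfree φ
  | .pathE ψ => BSLfreeP ψ
/-- Free variables of a BSL path formula. -/
def BSLfreeP : BSLPath AP Ag Var → Set Var
  | .state φ => BSLfree φ
  | .neg ψ => BSLfreeP ψ
  | .or ψ ψ' => BSLfreeP ψ ∪ BSLfreeP ψ'
  | .next ψ => BSLfreeP ψ
  | .untl ψ ψ' => BSLfreeP ψ ∪ BSLfreeP ψ'
end

/-- `SLdefFor A φ` holds when the SL semantics of `φ` is defined in every
assignment whose agent-domain is `A`: every temporal operator is only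
evaluated under a complete assignment (every agent being bound on the way). -/
def SLdefFor (A : Set Ag) : SLForm AP Ag Var → Prop
  | .atom _ => True
  | .neg φ => SLdefFor A φ
  | .or φ φ' => SLdefFor A φ ∧ SLdefFor A φ'
  | .exi _ φ => SLdefFor A φ
  | .bind a _ φ => SLdefFor (insert a A) φ
  | .next φ => A = Set.univ ∧ SLdefFor A φ
  | .untl φ φ' => A = Set.univ ∧ SLdefFor A φ ∧ SLdefFor A φ'

/-- The translation `tr : SL → BSL`, inserting a path quantifier in front of
each temporal operator and homomorphic elsewhere. -/
def tr : SLForm AP Ag Var → BSLForm AP Ag Var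
  | .atom p => .atom p
  | .neg φ => .neg (tr φ)
  | .or φ φ' => .or (tr φ) (tr φ')
  | .next φ => .pathE (.next (.state (tr φ)))
  | .untl φ φ' => .pathE (.untl (.state (tr φ)) (.state (tr φ')))
  | .exi x φ => .exi x (tr φ)
  | .bind a x φ => .bind a x (tr φ)

mutual
/-- `φ` avoids the fresh variables (those of the form `Sum.inr a`) used by the
translation `tr_A`. -/
def BSLavoidsFresh : BSLForm AP Ag (Var ⊕ Ag) → Prop
  | .atom _ => True
  | .neg φ => BSLavoidsFresh φ
  | .or φ φ' => BSLavoidsFresh φ ∧ BSLavoidsFresh φ'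
  | .exi x φ => x.isLeft ∧ BSLavoidsFresh φ
  | .bind _ x φ => x.isLeft ∧ BSLavoidsFresh φ
  | .unbind _ φ => BSLavoidsFresh φ
  | .pathE ψ => BSLavoidsFreshP ψ
def BSLavoidsFreshP : BSLPath AP Ag (Var ⊕ Ag) → Prop
  | .state φ => BSLavoidsFresh φ
  | .neg ψ => BSLavoidsFreshP ψ
  | .or ψ ψ' => BSLavoidsFreshP ψ ∧ BSLavoidsFreshP ψ'
  | .next ψ => BSLavoidsFreshP ψ
  | .untl ψ ψ' => BSLavoidsFreshP ψ ∧ BSLavoidsFreshP ψ'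
end

/-- Prefix a formula with the bindings `(a, x_a)` for all agents `a` in `l`. -/
def bindList (l : List Ag) (φ : SLForm AP Ag (Var ⊕ Ag)) : SLForm AP Ag (Var ⊕ Ag) :=
  l.foldr (fun a ψ => .bind a (Sum.inr a) ψ) φ

/-- Prefix a formula with the strategy quantifications `⟨⟨x_a⟩⟩` for `a ∈ l`. -/
def quantList (l : List Ag) (φ : SLForm AP Ag (Var ⊕ Ag)) : SLForm AP Ag (Var ⊕ Ag) :=
  l.foldr (fun a ψ => .exi (Sum.inr a) ψ) φ

noncomputable section

mutual
/-- The translation `tr_A : BSL → SL`, parameterized by the set `A` of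
currently unbound agents; each fresh variable for agent `a` is `Sum.inr a`. -/
def trA [DecidableEq Ag] (A : Finset Ag) :
    BSLForm AP Ag (Var ⊕ Ag) → SLForm AP Ag (Var ⊕ Ag)
  | .atom p => .atom p
  | .neg φ => .neg (trA A φ)
  | .or φ φ' => .or (trA A φ) (trA A φ')
  | .exi x φ => .exi x (trA A φ)
  | .bind a x φ => .bind a x (trA (A.erase a) φ)
  | .unbind a φ => trA (insert a A) φ
  | .pathE ψ => quantList A.toList (bindList A.toList (trAP A ψ))
/-- The homomorphic extension of `tr_A` to BSL path formulas. -/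
def trAP [DecidableEq Ag] (A : Finset Ag) :
    BSLPath AP Ag (Var ⊕ Ag) → SLForm AP Ag (Var ⊕ Ag)
  | .state φ => trA A φ
  | .neg ψ => .neg (trAP A ψ)
  | .or ψ ψ' => .or (trAP A ψ) (trAP A ψ')
  | .next ψ => .next (trAP A ψ)
  | .untl ψ ψ' => .untl (trAP A ψ) (trAP A ψ')
end
end

/-- Update an assignment by binding the listed agents to the listed strategies. -/
def updates [DecidableEq Ag] [DecidableEq V] (χ : Assign S Ag Act V) :
    List (Ag × Strat S Ag Act) → Assign S Ag Act V
  | [] => χ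
  | (a, σ) :: l => Function.update (updates χ l) (Sum.inl a) (some σ)

/-! Every agent of `A` is unbound in `tr_A φ`, and a path quantifier of `φ` rebinds all
currently unbound agents to fresh variables before any temporal operator is reached. Hence
the truth of `tr_A φ` never consults the strategies that the assignment gives to the agents
of `A`. -/

theorem Set.EqOn.update {α β : Type*} [DecidableEq α] {f g : α → β} {t : Set α} {i : α}
    (h : Set.EqOn f g (t \ {i})) (b : β) :
    Set.EqOn (Function.update f i b) (Function.update g i b) t := by
  intro x hx
  by_cases hxi : x = i
  · subst hxi
    simp only [Function.update_self]
  · simp only [Function.update_of_ne hxi]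
    exact h ⟨hx, hxi⟩

section IgnoresAgents

variable {V : Type} [DecidableEq S] [DecidableEq Ag] [DecidableEq V]
variable (G : CGS S Ag Act AP) (q : S)

def SLForm.IgnoresAgents (A : Set Ag) (ξ : SLForm AP Ag V) : Prop :=
  ∀ ⦃χ χ' : Assign S Ag Act V⦄, Set.EqOn χ χ' (Sum.inl '' A)ᶜ →
    (SLsat G χ q ξ ↔ SLsat G χ' q ξ)

variable {G q} {A B : Set Ag} {a : Ag} {ξ ξ' : SLForm AP Ag V}

namespace SLForm.IgnoresAgents

theorem mono (h : IgnoresAgents G q A ξ) (hBA : B ⊆ A) : IgnoresAgents G q B ξ :=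
  fun _ _ hχ => h (hχ.mono (Set.compl_subset_compl.2 (Set.image_mono hBA)))

theorem neg (h : IgnoresAgents G q A ξ) : IgnoresAgents G q A (.neg ξ) :=
  fun _ _ hχ => not_congr (h hχ)

theorem or (h : IgnoresAgents G q A ξ) (h' : IgnoresAgents G q A ξ') :
    IgnoresAgents G q A (.or ξ ξ') :=
  fun _ _ hχ => or_congr (h hχ) (h' hχ)

theorem exi (h : IgnoresAgents G q A ξ) (x : V) : IgnoresAgents G q A (.exi x ξ) :=
  fun _ _ hχ => exists_congr fun _ => h ((hχ.mono Set.sdiff_subset).update _)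

theorem bind (h : IgnoresAgents G q (A \ {a}) ξ) (x : V) : IgnoresAgents G q A (.bind a x ξ) := by
  intro χ χ' hχ
  have hx : χ (Sum.inr x) = χ' (Sum.inr x) := hχ (by simp)
  simp only [SLsat, hx]
  refine h (Set.EqOn.update (hχ.mono ?_) _)
  rintro _ ⟨hl, hla⟩ ⟨b, hb, rfl⟩
  exact hl ⟨b, ⟨hb, fun hba => hla (congrArg Sum.inl hba)⟩, rfl⟩

end SLForm.IgnoresAgents

open SLForm

theorem ignoresAgents_empty : IgnoresAgents G q ∅ ξ := by
  intro χ χ' hχ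
  rw [Set.image_empty, Set.compl_empty, Set.eqOn_univ] at hχ
  rw [hχ]

variable [DecidableEq Var]

theorem SLForm.IgnoresAgents.quantList {ξ : SLForm AP Ag (Var ⊕ Ag)}
    (h : IgnoresAgents G q A ξ) (L : List Ag) : IgnoresAgents G q A (quantList L ξ) := by
  induction L with
  | nil => exact h
  | cons a L ih => exact ih.exi (Sum.inr a)

theorem ignoresAgents_bindList (M : List Ag) (ξ : SLForm AP Ag (Var ⊕ Ag)) :
    IgnoresAgents G q {a | a ∈ M} (bindList M ξ) := by
  induction M with
  | nil => exact ignoresAgents_empty.mono fun _ => List.not_mem_nil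
  | cons a M ih =>
    refine IgnoresAgents.bind (ih.mono ?_) (Sum.inr a)
    intro b ⟨hb, hba⟩
    exact (List.mem_cons.1 hb).resolve_left hba

theorem ignoresAgents_trA :
    ∀ (φ : BSLForm AP Ag (Var ⊕ Ag)) (A : Finset Ag), IgnoresAgents G q ↑A (trA A φ)
  | .atom _, _ => fun _ _ _ => Iff.rfl
  | .neg φ, A => (ignoresAgents_trA φ A).neg
  | .or φ φ', A => (ignoresAgents_trA φ A).or (ignoresAgents_trA φ' A)
  | .exi x φ, A => (ignoresAgents_trA φ A).exi x
  | .bind a x φ, A => by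
    have h := ignoresAgents_trA φ (A.erase a)
    rw [Finset.coe_erase] at h
    exact h.bind x
  | .unbind a φ, A =>
    (ignoresAgents_trA φ (insert a A)).mono (Finset.coe_subset.2 (Finset.subset_insert a A))
  | .pathE ψ, A =>
    ((ignoresAgents_bindList A.toList (trAP A ψ)).mono fun _ => Finset.mem_toList.2).quantList
      A.toList

end IgnoresAgents

theorem eqOn_updates [DecidableEq Ag] {V : Type} [DecidableEq V] (χ : Assign S Ag Act V)
    {A : Set Ag} {l : List (Ag × Strat S Ag Act)} (hl : ∀ p ∈ l, p.1 ∈ A) :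
    Set.EqOn (updates χ l) χ (Sum.inl '' A)ᶜ := by
  induction l with
  | nil => exact Set.eqOn_refl _ _
  | cons p l ih =>
    intro x hx
    have hxp : x ≠ Sum.inl p.1 := fun h => hx ⟨p.1, hl p List.mem_cons_self, h.symm⟩
    rw [updates, Function.update_of_ne hxp]
    exact ih (fun p' hp' => hl p' (List.mem_cons_of_mem _ hp')) hx

/-- the truth value of `tr_A(φ)` is unaffected by (re)binding any
agents of `A` to any strategies. -/
theorem statement_5 [DecidableEq S] [DecidableEq Ag] [DecidableEq Var]
    (G : CGS S Ag Act AP) (q : S) (A : Finset Ag)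
    (φ : BSLForm AP Ag (Var ⊕ Ag)) (havoid : BSLavoidsFresh φ)
    (χ : Assign S Ag Act (Var ⊕ Ag))
    (hfor : ∀ x ∈ BSLfree φ, (χ (Sum.inr x)).isSome)
    (l : List (Ag × Strat S Ag Act)) (hl : ∀ p ∈ l, p.1 ∈ A) :
    SLsat G χ q (trA A φ) ↔ SLsat G (updates χ l) q (trA A φ) :=
  ignoresAgents_trA φ A (eqOn_updates χ hl).symm
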